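/- Let r ≥ 2 and K be positive integers with K | r, and let m1 be an integer coprime to r with a1 its inverse modulo K (0 < a1 < K). Then the sum over t = 0 to K-1 and ℓ = 1 to (r-K)/K of (m1⁻¹m2·ℓ − 1 + t·m1⁻¹ + r·s_ℓ)·(r/K − ℓ), where m2 is an integer, m1⁻¹ is an inverse of m1 mod r, and s_ℓ is chosen so each first factor lies in (0, r), is congruent modulo r to −m1⁻¹m2·r(2r−K)(r−K)/(6K²) + r(r−K)/(2K) + m1⁻¹·r(r−K)(K−1)/(4K). -/

import Mathlib

/-!
Write `r = K q`. Modulo `r` the shifts `r s_{t,ℓ}` disappear, and what is left is a polynomial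
double sum with an exact closed form: with `e = q(q-1)/2`, `p = ∑_{ℓ<q} ℓ²` and `g = K(K-1)/2`,
it equals `K A (q e - p) - K e + m₁⁻¹ e g` (where `A = m₁⁻¹ m₂`), while the right-hand side is
`-K A p + K e + m₁⁻¹ e g`. The difference `K q (A e - (q - 1))` is a multiple of `r`.
-/

open Finset

theorem Int.sum_Icc_add_one_right {M : Type*} [AddCommMonoid M] (f : ℤ → M) {a b : ℤ}
    (h : a ≤ b + 1) : ∑ k ∈ Icc a (b + 1), f k = ∑ k ∈ Icc a b, f k + f (b + 1) := by
  rw [← insert_Icc_right_eq_Icc_add_one h, sum_insert (by simp), add_comm]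

theorem Int.six_mul_sum_Icc_sq {n : ℤ} (hn : 0 ≤ n) :
    6 * ∑ k ∈ Icc 0 n, k ^ 2 = n * (n + 1) * (2 * n + 1) := by
  induction n, hn using Int.leInduction with
  | base => simp
  | succ n hn ih =>
    rw [Int.sum_Icc_add_one_right _ (by omega)]
    linear_combination ih

theorem six_mul_sum_Icc_linear_mul_sub (A B q : ℤ) {n : ℤ} (hn : 0 ≤ n) :
    6 * ∑ l ∈ Icc 1 n, (A * l + B) * (q - l)
      = 3 * (A * q - B) * n * (n + 1) - A * n * (n + 1) * (2 * n + 1) + 6 * B * q * n := by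
  induction n, hn using Int.leInduction with
  | base => simp
  | succ n hn ih =>
    rw [Int.sum_Icc_add_one_right _ (by omega)]
    linear_combination ih

theorem two_mul_sum_Icc_linear (C D : ℤ) {n : ℤ} (hn : 0 ≤ n) :
    2 * ∑ t ∈ Icc 0 n, (C + D * t) = 2 * (n + 1) * C + D * n * (n + 1) := by
  induction n, hn using Int.leInduction with
  | base => simp
  | succ n hn ih =>
    rw [Int.sum_Icc_add_one_right _ (by omega)]
    linear_combination ih

theorem sum_sum_add_mul_mul_modEq (r : ℤ) (I J : Finset ℤ) (f g s : ℤ → ℤ → ℤ) :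
    ∑ t ∈ I, ∑ l ∈ J, (f t l + r * s t l) * g t l
      ≡ ∑ t ∈ I, ∑ l ∈ J, f t l * g t l [ZMOD r] :=
  Int.ModEq.sum fun _ _ => Int.ModEq.sum fun _ _ =>
    Int.ModEq.mul_right _ (Int.add_mul_emod_self_left _ _ _)

theorem sum_Icc_linear_mul_sub_eq (A B q e p : ℤ) (hq : 1 ≤ q) (he : 2 * e = q * (q - 1))
    (hp : 6 * p = (q - 1) * q * (2 * q - 1)) :
    ∑ l ∈ Icc 1 (q - 1), (A * l + B) * (q - l) = A * (q * e - p) + B * e := by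
  have h := six_mul_sum_Icc_linear_mul_sub A B q (n := q - 1) (by omega)
  refine mul_left_cancel₀ (by norm_num : (6 : ℤ) ≠ 0) ?_
  linear_combination h + (-3 * A * q - 3 * B) * he + A * hp

theorem sum_sum_path_weights_eq (A c K q e p g : ℤ) (hK : 1 ≤ K) (hq : 1 ≤ q)
    (he : 2 * e = q * (q - 1)) (hp : 6 * p = (q - 1) * q * (2 * q - 1))
    (hg : 2 * g = K * (K - 1)) :
    ∑ t ∈ Icc 0 (K - 1), ∑ l ∈ Icc 1 (q - 1), (A * l - 1 + t * c) * (q - l)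
      = K * A * (q * e - p) - K * e + c * (e * g) := by
  have inner : ∀ t : ℤ, ∑ l ∈ Icc 1 (q - 1), (A * l - 1 + t * c) * (q - l)
      = (A * (q * e - p) - e) + c * e * t := by
    intro t
    calc _ = ∑ l ∈ Icc 1 (q - 1), (A * l + (t * c - 1)) * (q - l) :=
          sum_congr rfl fun _ _ => by ring
      _ = _ := by rw [sum_Icc_linear_mul_sub_eq A _ q e p hq he hp]; ring
  have outer := two_mul_sum_Icc_linear (A * (q * e - p) - e) (c * e) (n := K - 1) (by omega)
  simp only [inner]
  refine mul_left_cancel₀ (by norm_num : (2 : ℤ) ≠ 0) ?_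
  linear_combination outer - c * e * hg

theorem path_count_formula_eq (A c K q e p g : ℤ) (hK : 0 < K) (he : 2 * e = q * (q - 1))
    (hp : 6 * p = (q - 1) * q * (2 * q - 1)) (hg : 2 * g = K * (K - 1)) :
    -A * (K * q * (2 * (K * q) - K) * (K * q - K) / (6 * K ^ 2)) + K * q * (K * q - K) / (2 * K)
        + c * (K * q * (K * q - K) * (K - 1) / (4 * K))
      = -A * (K * p) + K * e + c * (e * g) := by
  rw [Int.ediv_eq_of_eq_mul_right (by positivity) (show K * q * (2 * (K * q) - K) * (K * q - K)
      = 6 * K ^ 2 * (K * p) by linear_combination -K ^ 3 * hp),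
    Int.ediv_eq_of_eq_mul_right (by positivity) (show K * q * (K * q - K) = 2 * K * (K * e) by
      linear_combination -K ^ 2 * he),
    Int.ediv_eq_of_eq_mul_right (by positivity) (show K * q * (K * q - K) * (K - 1)
      = 4 * K * (e * g) by linear_combination -K ^ 2 * (K - 1) * he - 2 * K * e * hg)]

theorem stmt_11_general (r K : ℤ) (hr : 2 ≤ r) (hK : 0 < K) (hdvd : K ∣ r)
    (m2 m1inv : ℤ)
    (s : ℤ → ℤ → ℤ) :
    ∑ t ∈ Finset.Icc (0 : ℤ) (K - 1), ∑ l ∈ Finset.Icc (1 : ℤ) ((r - K) / K),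
        (m1inv * m2 * l - 1 + t * m1inv + r * s t l) * (r / K - l)
      ≡ -(m1inv * m2) * (r * (2 * r - K) * (r - K) / (6 * K ^ 2))
          + r * (r - K) / (2 * K)
          + m1inv * (r * (r - K) * (K - 1) / (4 * K)) [ZMOD r] := by
  obtain ⟨q, rfl⟩ := hdvd
  have hq : 1 ≤ q := by nlinarith
  obtain ⟨e, he⟩ : ∃ e, 2 * e = q * (q - 1) :=
    ⟨_, Int.mul_ediv_cancel' (Int.even_mul_pred_self q).two_dvd⟩
  obtain ⟨g, hg⟩ : ∃ g, 2 * g = K * (K - 1) :=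
    ⟨_, Int.mul_ediv_cancel' (Int.even_mul_pred_self K).two_dvd⟩
  set p := ∑ k ∈ Icc 0 (q - 1), k ^ 2
  have hp : 6 * p = (q - 1) * q * (2 * q - 1) := by
    linear_combination Int.six_mul_sum_Icc_sq (n := q - 1) (by omega)
  rw [path_count_formula_eq _ _ K q e p g hK he hp hg, Int.mul_ediv_cancel_left q hK.ne',
    Int.ediv_eq_of_eq_mul_right hK.ne' (show K * q - K = K * (q - 1) by ring)]
  refine (sum_sum_add_mul_mul_modEq _ _ _ (fun t l => m1inv * m2 * l - 1 + t * m1inv)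
    (fun _ l => q - l) s).trans ?_
  rw [sum_sum_path_weights_eq _ _ K q e p g (by omega) hq he hp hg]
  exact Int.modEq_iff_dvd.2 ⟨q - 1 - m1inv * m2 * e, by linear_combination K * he⟩

/-- Count (mod r) of 3-step admissible paths from `(v₀,0)` to `(v₃,0)` when
    `gcd(m₂,r) = K`: with `m₁⁻¹` an inverse of `m₁` mod `r` in `(0,r)`, and
    `s t ℓ` shifts so that each first factor lies in `(0,r)`,
    `∑_{t=0}^{K-1} ∑_{ℓ=1}^{(r-K)/K} (m₁⁻¹m₂ℓ − 1 + t·m₁⁻¹ + r·s_{t,ℓ})·(r/K − ℓ)`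
    is congruent mod `r` to
    `−m₁⁻¹m₂·r(2r−K)(r−K)/(6K²) + r(r−K)/(2K) + m₁⁻¹·r(r−K)(K−1)/(4K)`. -/
theorem stmt_11 (r K : ℤ) (hr : 2 ≤ r) (hK : 0 < K) (hdvd : K ∣ r)
    (m1 m2 m1inv : ℤ) (hm1 : Int.gcd m1 r = 1)
    (hinv : m1 * m1inv ≡ 1 [ZMOD r]) (hinv_pos : 0 < m1inv) (hinv_lt : m1inv < r)
    (s : ℤ → ℤ → ℤ)
    (hs : ∀ t ∈ Finset.Icc (0 : ℤ) (K - 1), ∀ l ∈ Finset.Icc (1 : ℤ) ((r - K) / K),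
      0 < m1inv * m2 * l - 1 + t * m1inv + r * s t l ∧
        m1inv * m2 * l - 1 + t * m1inv + r * s t l < r) :
    ∑ t ∈ Finset.Icc (0 : ℤ) (K - 1), ∑ l ∈ Finset.Icc (1 : ℤ) ((r - K) / K),
        (m1inv * m2 * l - 1 + t * m1inv + r * s t l) * (r / K - l)
      ≡ -(m1inv * m2) * (r * (2 * r - K) * (r - K) / (6 * K ^ 2))
          + r * (r - K) / (2 * K)
          + m1inv * (r * (r - K) * (K - 1) / (4 * K)) [ZMOD r] :=
  stmt_11_general r K hr hK hdvd m2 m1inv s
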